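/- Let L be a linear operator on E and let v : ℝ → E be differentiable at t with ‖v t‖ = 1 and v'(t) = L (v t) − Re⟨v t, L (v t)⟩ • v t. Define 𝒫 s : E →ₗ[ℂ] E as the rank-one operator x ↦ ⟨v s, x⟩ • v s. Then s ↦ 𝒫 s is differentiable at t, with derivative L ∘ 𝒫 t + 𝒫 t ∘ L† − (2·Re⟨v t, L (v t)⟩) • 𝒫 t, where L† is the adjoint of L. -/

import Mathlib

/-- The rank-one (projection) operator `x ↦ ⟨u, x⟩ • u`, as a continuous linear map. -/
noncomputable def rankOneC {E : Type*} [NormedAddCommGroup E] [InnerProductSpace ℂ E]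
    (u : E) : E →L[ℂ] E :=
  (innerSL ℂ u).smulRight u

/-!
The outer product `(x, y) ↦ |x⟩⟨y|` is real-bilinear and bounded, so the product rule gives
`d𝒫/dt = |v'⟩⟨v| + |v⟩⟨v'|`. Substituting `v' = L v - r v` with `r = Re⟨v, L v⟩` and using
`L |v⟩⟨v| = |L v⟩⟨v|` and `|v⟩⟨v| L† = |v⟩⟨L v|` yields the formula.
-/

open InnerProductSpace ContinuousLinearMap

section
variable {E F : Type*} [NormedAddCommGroup E] [NormedSpace ℂ E]
  [NormedAddCommGroup F] [InnerProductSpace ℂ F]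

theorem isBoundedBilinearMap_rankOne :
    IsBoundedBilinearMap ℝ (fun p : E × F => rankOne ℂ p.1 p.2) where
  add_left x₁ x₂ y := by simp only [map_add, add_apply]
  smul_left c x y := by simp only [← Complex.coe_smul, map_smul, smul_apply]
  add_right x y₁ y₂ := by simp only [map_add]
  smul_right c x y := by simp only [← Complex.coe_smul, map_smulₛₗ, Complex.conj_ofReal]
  bound := ⟨1, one_pos, fun x y => by simp⟩

theorem HasDerivAt.rankOne {x : ℝ → E} {y : ℝ → F} {x' : E} {y' : F} {t : ℝ}
    (hx : HasDerivAt x x' t) (hy : HasDerivAt y y' t) :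
    HasDerivAt (fun s => rankOne ℂ (x s) (y s))
      (rankOne ℂ x' (y t) + rankOne ℂ (x t) y') t := by
  have h := (isBoundedBilinearMap_rankOne.hasFDerivAt (x t, y t)).comp_hasDerivAt t
    (hx.prodMk hy)
  rwa [isBoundedBilinearMap_rankOne.deriv_apply, add_comm] at h

end

theorem comp_rankOne_self_add_rankOne_self_comp_adjoint {𝕜 E : Type*} [RCLike 𝕜]
    [NormedAddCommGroup E] [InnerProductSpace 𝕜 E] [CompleteSpace E] (L : E →L[𝕜] E) (u : E) :
    L ∘L rankOne 𝕜 u u + rankOne 𝕜 u u ∘L adjoint L = rankOne 𝕜 (L u) u + rankOne 𝕜 u (L u) := by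
  rw [comp_rankOne, rankOne_comp, adjoint_adjoint]

theorem rankOneC_eq_rankOne {E : Type*} [NormedAddCommGroup E] [InnerProductSpace ℂ E] (u : E) :
    rankOneC u = rankOne ℂ u u := rfl

theorem projector_derivative_general
    {E : Type*} [NormedAddCommGroup E] [InnerProductSpace ℂ E] [FiniteDimensional ℂ E]
    (L : E →L[ℂ] E) (v : ℝ → E) (t : ℝ)
    (hv : HasDerivAt v (L (v t) - (inner ℂ (v t) (L (v t)) : ℂ).re • v t) t) :
    HasDerivAt (fun s => rankOneC (v s))
      (L.comp (rankOneC (v t)) + (rankOneC (v t)).comp (ContinuousLinearMap.adjoint L) -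
        (((2 * (inner ℂ (v t) (L (v t)) : ℂ).re : ℝ) : ℂ)) • rankOneC (v t)) t := by
  set r := (inner ℂ (v t) (L (v t)) : ℂ).re
  have hderiv : rankOne ℂ (L (v t) - r • v t) (v t) + rankOne ℂ (v t) (L (v t) - r • v t) =
      L ∘L rankOne ℂ (v t) (v t) + rankOne ℂ (v t) (v t) ∘L adjoint L -
        ((2 * r : ℝ) : ℂ) • rankOne ℂ (v t) (v t) := by
    rw [comp_rankOne_self_add_rankOne_self_comp_adjoint]
    simp only [map_sub, sub_apply, ← Complex.coe_smul, map_smul, smul_apply, map_smulₛₗ,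
      Complex.conj_ofReal]
    push_cast
    module
  simpa only [rankOneC_eq_rankOne, hderiv] using hv.rankOne hv

/-- Eq. (A20) of the paper: under the normalized master equation, the projector onto the
time-evolved state vector satisfies `d𝒫_t/dt = L 𝒫_t + 𝒫_t L† − 2 Re⟨v t, L (v t)⟩ 𝒫_t`. -/
theorem projector_derivative
    {E : Type*} [NormedAddCommGroup E] [InnerProductSpace ℂ E] [FiniteDimensional ℂ E]
    (L : E →L[ℂ] E) (v : ℝ → E) (t : ℝ) (hnorm : ‖v t‖ = 1)
    (hv : HasDerivAt v (L (v t) - (inner ℂ (v t) (L (v t)) : ℂ).re • v t) t) :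
    HasDerivAt (fun s => rankOneC (v s))
      (L.comp (rankOneC (v t)) + (rankOneC (v t)).comp (ContinuousLinearMap.adjoint L) -
        (((2 * (inner ℂ (v t) (L (v t)) : ℂ).re : ℝ) : ℂ)) • rankOneC (v t)) t :=
  projector_derivative_general L v t hv
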